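/- arXiv:1701.06639 — 2 statements merged into one kernel-verified Lean document; each statement's English description precedes it below -/
import Mathlib

section
/- For any finite simple graph G and any positive integer k, the number of convex colorings of the disjoint union G ⊔ K₁ with at most k colors equals k times the number of convex colorings of G with at most k−1 colors. -/
/-!
A preconnected colour class containing an isolated vertex is a singleton, so in a convex
colouring of `G ⊔ K₁` the new vertex has a colour `c` of its own and `G` is coloured with the
remaining `k - 1` colours. Relabelling the colours by `Fin k ≃ Option (Fin (k - 1))` with
`c ↦ none`, such colourings are exactly the maps `Option.map g` for convex colourings `g` of `G`.
-/

/-- The number of convex colorings of `G` with at most `k` colors: colorings where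
every color class induces a connected subgraph (the empty subgraph counting as
connected, i.e. we use preconnectedness of induced subgraphs). -/
noncomputable def convexCount {V : Type*} (G : SimpleGraph V) (k : ℕ) : ℕ :=
  Nat.card {f : V → Fin k // ∀ c, (G.induce (f ⁻¹' {c})).Preconnected}

/-- The disjoint union `G ⊔ K₁`: `G` together with one additional isolated vertex. -/
def addIsolated {V : Type*} (G : SimpleGraph V) : SimpleGraph (Option V) where
  Adj a b := match a, b with
    | some u, some v => G.Adj u v
    | _, _ => False
  symm := by
    constructor
    intro a b h
    cases a <;> cases b <;> simp_all <;> exact G.adj_symm h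
  loopless := by
    constructor
    intro a h
    cases a <;> simp_all

def Equiv.prodOfFiberEquiv {α β X : Type*} (φ : α → β) (e : ∀ b, {a // φ a = b} ≃ X) :
    α ≃ β × X :=
  (Equiv.sigmaFiberEquiv φ).symm.trans <|
    (Equiv.sigmaCongrRight e).trans (Equiv.sigmaEquivProd β X)

namespace SimpleGraph

variable {V W α β : Type*}

def IsConvexColoring (H : SimpleGraph W) (f : W → α) : Prop :=
  ∀ c, (H.induce (f ⁻¹' {c})).Preconnected

lemma convexCount_eq_card (H : SimpleGraph W) (k : ℕ) :
    convexCount H k = Nat.card {f : W → Fin k // H.IsConvexColoring f} :=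
  rfl

lemma isConvexColoring_equiv_comp_iff {H : SimpleGraph W} (e : α ≃ β) {f : W → α} :
    H.IsConvexColoring (e ∘ f) ↔ H.IsConvexColoring f := by
  have hclass (c : α) : (e ∘ f) ⁻¹' {e c} = f ⁻¹' {c} := by ext; simp
  rw [IsConvexColoring, ← e.forall_congr_right]
  exact forall_congr' fun c => by rw [hclass]

lemma IsConvexColoring.apply_ne_of_isIsolated {H : SimpleGraph W} {f : W → α}
    (hf : H.IsConvexColoring f) {x : W} (hx : H.IsIsolated x) {y : W} (hy : y ≠ x) :
    f y ≠ f x := by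
  intro hyx
  have : Nontrivial (f ⁻¹' {f x}) :=
    ⟨⟨x, rfl⟩, ⟨y, hyx⟩, fun h => hy (congrArg Subtype.val h).symm⟩
  exact (hf (f x)).not_isIsolated ⟨x, rfl⟩ fun z hz => hx z hz

def convexColoringFiberCongr (H : SimpleGraph W) (x : W) (e : α ≃ β) (c : α) :
    {f : W → α // H.IsConvexColoring f ∧ f x = c} ≃
      {f : W → β // H.IsConvexColoring f ∧ f x = e c} :=
  Equiv.subtypeEquiv (Equiv.arrowCongr (Equiv.refl W) e) fun _ =>
    and_congr (isConvexColoring_equiv_comp_iff e).symm e.apply_eq_iff_eq.symm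

lemma isIsolated_addIsolated_none (G : SimpleGraph V) : (addIsolated G).IsIsolated none :=
  fun x h => by cases x <;> exact h

def induceAddIsolatedIso (G : SimpleGraph V) {S : Set (Option V)} (h : none ∉ S) :
    G.induce (some ⁻¹' S) ≃g (addIsolated G).induce S where
  toFun x := ⟨some x.1, x.2⟩
  invFun
    | ⟨some v, hv⟩ => ⟨v, hv⟩
    | ⟨none, hv⟩ => absurd hv h
  left_inv _ := rfl
  right_inv
    | ⟨some _, _⟩ => rfl
    | ⟨none, hv⟩ => absurd hv h
  map_rel_iff' := Iff.rfl

lemma isConvexColoring_addIsolated_optionMap_iff {G : SimpleGraph V} {g : V → β} :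
    (addIsolated G).IsConvexColoring (Option.map g) ↔ G.IsConvexColoring g := by
  have hnone : Option.map g ⁻¹' {none} = {none} := by ext x; simp
  have hsome (d : β) : some ⁻¹' (Option.map g ⁻¹' {some d}) = g ⁻¹' {d} := by ext v; simp
  have hnotMem (d : β) : none ∉ Option.map g ⁻¹' {some d} := by simp
  rw [IsConvexColoring, Option.forall, hnone]
  refine (and_iff_right Preconnected.of_subsingleton).trans (forall_congr' fun d => ?_)
  rw [← (induceAddIsolatedIso G (hnotMem d)).preconnected_iff, hsome]

noncomputable def convexColoringOptionMapEquiv (G : SimpleGraph V) (β : Type*) :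
    {g : V → β // G.IsConvexColoring g} ≃
      {f : Option V → Option β // (addIsolated G).IsConvexColoring f ∧ f none = none} := by
  refine Equiv.ofBijective
    (fun g => ⟨Option.map g, isConvexColoring_addIsolated_optionMap_iff.2 g.2, rfl⟩)
    ⟨?_, ?_⟩
  · intro g₁ g₂ h
    exact Subtype.ext (Option.map_injective' (congrArg Subtype.val h))
  · rintro ⟨f, hf, hf_none⟩
    have hsome (v : V) : f (some v) ≠ none := hf_none ▸
      hf.apply_ne_of_isIsolated (isIsolated_addIsolated_none G) (Option.some_ne_none v)
    choose g hg using fun v => Option.ne_none_iff_exists'.1 (hsome v)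
    have hfg : f = Option.map g := by
      funext x
      cases x <;> simp [hf_none, hg]
    subst hfg
    exact ⟨⟨g, isConvexColoring_addIsolated_optionMap_iff.1 hf⟩, rfl⟩

noncomputable def convexColoringAddIsolatedEquiv (G : SimpleGraph V) (n : ℕ) :
    {f : Option V → Fin (n + 1) // (addIsolated G).IsConvexColoring f} ≃
      Fin (n + 1) × {g : V → Fin n // G.IsConvexColoring g} :=
  Equiv.prodOfFiberEquiv (fun f => f.1 none) fun c =>
    (Equiv.subtypeSubtypeEquivSubtypeInter _ fun f : Option V → Fin (n + 1) => f none = c).trans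
      <| (convexColoringFiberCongr _ none (finSuccEquiv' c) c).trans <|
        (Equiv.subtypeEquivRight fun f => by rw [finSuccEquiv'_at]).trans
          (convexColoringOptionMapEquiv G (Fin n)).symm

end SimpleGraph

theorem convexCount_addIsolated_general {V : Type*} (G : SimpleGraph V)
    (k : ℕ) :
    convexCount (addIsolated G) k = k * convexCount G (k - 1) := by
  cases k with
  | zero => simp [convexCount]
  | succ n =>
    rw [Nat.add_sub_cancel, G.convexCount_eq_card, (addIsolated G).convexCount_eq_card,
      Nat.card_congr (G.convexColoringAddIsolatedEquiv n), Nat.card_prod, Nat.card_fin]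

/-- `χ_convex(G ⊔ K₁; k) = k · χ_convex(G; k−1)`. -/
theorem convexCount_addIsolated {V : Type*} [Fintype V] (G : SimpleGraph V)
    (k : ℕ) (hk : 1 ≤ k) :
    convexCount (addIsolated G) k = k * convexCount G (k - 1) :=
  convexCount_addIsolated_general G k
end

section
/- Let H be a connected graph with a distinguished vertex v, and let □_{H,v}(G) be the graph with vertex set V(G) ⊔ V(H), edges E(G) ⊔ E(H) together with all edges between v and each vertex of G. Then for every k ≥ 1, the number of DU(H)-colorings of □_{H,v}(G) with at most k colors equals k times the number of DU(H)-colorings of G with at most k−1 colors. -/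
/-- The disjoint union of copies of `H` indexed by `ι`. -/
def copiesGraph {U : Type*} (H : SimpleGraph U) (ι : Type*) : SimpleGraph (ι × U) where
  Adj a b := a.1 = b.1 ∧ H.Adj a.2 b.2
  symm := ⟨by rintro ⟨i, a⟩ ⟨j, b⟩ ⟨h1, h2⟩; exact ⟨h1.symm, h2.symm⟩⟩
  loopless := ⟨by rintro ⟨i, a⟩ ⟨_, h⟩; exact H.irrefl h⟩

/-- `f` is a `DU(H)`-coloring of `G`: every color class induces a subgraph isomorphic
to a disjoint union of (possibly zero) copies of `H`. -/
def IsDUColoring {V U : Type*} (H : SimpleGraph U) (G : SimpleGraph V) {k : ℕ}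
    (f : V → Fin k) : Prop :=
  ∀ c, ∃ n : ℕ, Nonempty ((G.induce (f ⁻¹' {c})) ≃g copiesGraph H (Fin n))

/-- The number of `DU(H)`-colorings of `G` with at most `k` colors. -/
noncomputable def duCount {V U : Type*} (H : SimpleGraph U) (G : SimpleGraph V)
    (k : ℕ) : ℕ :=
  Nat.card {f : V → Fin k // IsDUColoring H G f}

/-- The graph `□_{H,v}(G)`: the disjoint union of `G` and `H` together with all edges
between the distinguished vertex `v` of `H` and the vertices of `G`. -/
def boxGraph {V U : Type*} (H : SimpleGraph U) (v : U) (G : SimpleGraph V) :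
    SimpleGraph (V ⊕ U) where
  Adj a b := match a, b with
    | .inl u, .inl u' => G.Adj u u'
    | .inr w, .inr w' => H.Adj w w'
    | .inl _, .inr w => w = v
    | .inr w, .inl _ => w = v
  symm := ⟨by
    rintro (u | w) (u' | w') h <;> simp_all <;> first | exact G.adj_symm h | exact H.adj_symm h⟩
  loopless := ⟨by
    rintro (u | w) h <;> simp_all⟩

open SimpleGraph Sum

section Aux
variable {V U : Type*}

lemma copies_reach_fst {H : SimpleGraph U} {ι : Type*} {a b : ι × U}
    (h : (copiesGraph H ι).Reachable a b) : a.1 = b.1 := by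
  obtain ⟨p⟩ := h
  induction p with
  | nil => rfl
  | cons h p ih => exact h.1.trans ih

def copiesHom (H : SimpleGraph U) (ι : Type*) (i : ι) : H →g copiesGraph H ι where
  toFun u := (i, u)
  map_rel' h := ⟨rfl, h⟩

lemma copies_fst_reach {H : SimpleGraph U} (hH : H.Connected) {ι : Type*} {a b : ι × U}
    (h : a.1 = b.1) : (copiesGraph H ι).Reachable a b := by
  obtain ⟨i, a⟩ := a; obtain ⟨j, b⟩ := b
  cases h
  exact (hH.preconnected a b).map (copiesHom H ι i)

def oneCopy (H : SimpleGraph U) : H ≃g copiesGraph H (Fin 1) where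
  toEquiv :=
    { toFun := fun u => (0, u)
      invFun := fun p => p.2
      left_inv := fun u => rfl
      right_inv := fun p => Prod.ext_iff.2 ⟨Subsingleton.elim _ _, rfl⟩ }
  map_rel_iff' := ⟨fun h => h.2, fun h => ⟨rfl, h⟩⟩

noncomputable def isoInl {H : SimpleGraph U} {v : U} {G : SimpleGraph V}
    (s : Set (V ⊕ U)) (t : Set V)
    (h1 : ∀ x, Sum.inl x ∈ s ↔ x ∈ t) (h2 : ∀ u, Sum.inr u ∉ s) :
    (G.induce t) ≃g ((boxGraph H v G).induce s) where
  toEquiv := Equiv.ofBijective (fun x => ⟨Sum.inl x.1, (h1 x.1).2 x.2⟩)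
    ⟨by
      intro a b hab
      apply Subtype.ext
      have := congrArg Subtype.val hab
      simpa using this,
     by
      rintro ⟨(x | u), hx⟩
      · exact ⟨⟨x, (h1 x).1 hx⟩, rfl⟩
      · exact absurd hx (h2 u)⟩
  map_rel_iff' := Iff.rfl

noncomputable def isoInr {H : SimpleGraph U} {v : U} {G : SimpleGraph V}
    (s : Set (V ⊕ U)) (h : ∀ y, y ∈ s ↔ ∃ u, y = Sum.inr u) :
    H ≃g ((boxGraph H v G).induce s) where
  toEquiv := Equiv.ofBijective (fun u => ⟨Sum.inr u, (h _).2 ⟨u, rfl⟩⟩)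
    ⟨by
      intro a b hab
      have := congrArg Subtype.val hab
      simpa using this,
     by
      rintro ⟨y, hy⟩
      obtain ⟨u, rfl⟩ := (h y).1 hy
      exact ⟨u, rfl⟩⟩
  map_rel_iff' := Iff.rfl

def fiberEquiv {A : Type*} {G' : SimpleGraph A} {H : SimpleGraph U} {n : ℕ}
    (φ : G' ≃g copiesGraph H (Fin n)) (i : Fin n) :
    {y : A // (φ y).1 = i} ≃ U where
  toFun y := (φ y.1).2
  invFun u := ⟨φ.symm (i, u), by simp⟩
  left_inv y := by
    obtain ⟨y, hy⟩ := y
    apply Subtype.ext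
    have : (i, (φ y).2) = φ y := by rw [← hy]
    simp only [this]
    simp
  right_inv u := by simp

lemma stay_inr {H : SimpleGraph U} {v : U} {G : SimpleGraph V} {s : Set (V ⊕ U)}
    (hv : Sum.inr v ∉ s) :
    ∀ {x y : ↥s} (_ : ((boxGraph H v G).induce s).Walk x y),
      (∃ w, x.1 = Sum.inr w) → ∃ w, y.1 = Sum.inr w := by
  intro x y p
  induction p with
  | nil => exact id
  | @cons x b y h p ih =>
    intro hx
    apply ih
    obtain ⟨w, hw⟩ := hx
    have hadj : (boxGraph H v G).Adj x.1 b.1 := h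
    rw [hw] at hadj
    cases hb : b.1 with
    | inl z =>
      rw [hb] at hadj
      have : w = v := hadj
      subst this
      exact absurd (hw ▸ x.2) hv
    | inr z => exact ⟨z, rfl⟩


end Aux

lemma key {V U : Type*} [Fintype V] [Fintype U] (H : SimpleGraph U) (hH : H.Connected)
    (v : U) (G : SimpleGraph V) {k : ℕ} (f : V ⊕ U → Fin k)
    (hf : IsDUColoring H (boxGraph H v G) f) :
    (∀ u, f (Sum.inr u) = f (Sum.inr v)) ∧ ∀ x, f (Sum.inl x) ≠ f (Sum.inr v) := by
  classical
  have h1 : ∀ u, f (Sum.inr u) = f (Sum.inr v) := by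
    by_contra hcon
    push_neg at hcon
    obtain ⟨u, hu⟩ := hcon
    obtain ⟨n, ⟨φ⟩⟩ := hf (f (Sum.inr u))
    set s : Set (V ⊕ U) := f ⁻¹' {f (Sum.inr u)} with hs
    have hvs : Sum.inr v ∉ s := by
      simp only [hs, Set.mem_preimage, Set.mem_singleton_iff]
      exact fun h => hu h.symm
    have hus : Sum.inr u ∈ s := rfl
    set x₀ : ↥s := ⟨Sum.inr u, hus⟩ with hx₀
    have hmem : ∀ y : {y : ↥s // (φ y).1 = (φ x₀).1}, ∃ w, y.1.1 = Sum.inr w := by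
      intro y
      have hr1 : (copiesGraph H (Fin n)).Reachable (φ x₀) (φ y.1) :=
        copies_fst_reach hH y.2.symm
      have hr2 := hr1.map φ.symm.toHom
      have e1 : φ.symm.toHom (φ x₀) = x₀ := φ.symm_apply_apply x₀
      have e2 : φ.symm.toHom (φ y.1) = y.1 := φ.symm_apply_apply y.1
      rw [e1, e2] at hr2
      obtain ⟨p⟩ := hr2
      exact stay_inr hvs p ⟨u, rfl⟩
    have hinj : Function.Injective (fun y : {y : ↥s // (φ y).1 = (φ x₀).1} =>
        (⟨(hmem y).choose, by
          have h := (hmem y).choose_spec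
          have hy2 : f (y.1.1) = f (Sum.inr u) := y.1.2
          rw [h] at hy2
          exact hy2⟩ : {w : U // f (Sum.inr w) = f (Sum.inr u)})) := by
      intro a b hab
      have h2 := congrArg Subtype.val hab
      simp only at h2
      have ha := (hmem a).choose_spec
      have hb := (hmem b).choose_spec
      apply Subtype.ext; apply Subtype.ext
      rw [ha, hb, h2]
    have hcard1 : Fintype.card {y : ↥s // (φ y).1 = (φ x₀).1} = Fintype.card U :=
      Fintype.card_congr (fiberEquiv φ _)
    have hcard2 : Fintype.card {w : U // f (Sum.inr w) = f (Sum.inr u)} < Fintype.card U :=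
      Fintype.card_subtype_lt (x := v) (fun h => hu h.symm)
    have hcard3 := Fintype.card_le_of_injective _ hinj
    omega
  refine ⟨h1, ?_⟩
  intro x hx
  obtain ⟨n, ⟨φ⟩⟩ := hf (f (Sum.inr v))
  set s : Set (V ⊕ U) := f ⁻¹' {f (Sum.inr v)} with hs
  have hall : ∀ u, (Sum.inr u : V ⊕ U) ∈ s := fun u => h1 u
  have hxs : (Sum.inl x : V ⊕ U) ∈ s := hx
  set x₀ : ↥s := ⟨Sum.inr v, hall v⟩ with hx₀
  let ψ : H →g (boxGraph H v G).induce s :=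
    { toFun := fun u => ⟨Sum.inr u, hall u⟩
      map_rel' := fun h => h }
  have hfib : ∀ u, (φ ⟨Sum.inr u, hall u⟩).1 = (φ x₀).1 := by
    intro u
    have hr := ((hH.preconnected v u).map ψ).map φ.toHom
    exact (copies_reach_fst hr).symm
  have hxfib : (φ ⟨Sum.inl x, hxs⟩).1 = (φ x₀).1 := by
    have hadj : ((boxGraph H v G).induce s).Adj ⟨Sum.inl x, hxs⟩ x₀ := rfl
    exact (φ.map_rel_iff.2 hadj).1
  have hinj : Function.Injective (fun u : U =>
      (⟨⟨Sum.inr u, hall u⟩, hfib u⟩ : {y : ↥s // (φ y).1 = (φ x₀).1})) := by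
    intro a b hab
    have := congrArg (fun y => (Subtype.val (Subtype.val y))) hab
    simpa using this
  have hnot : (⟨⟨Sum.inl x, hxs⟩, hxfib⟩ : {y : ↥s // (φ y).1 = (φ x₀).1}) ∉
      Set.range (fun u : U => (⟨⟨Sum.inr u, hall u⟩, hfib u⟩ :
        {y : ↥s // (φ y).1 = (φ x₀).1})) := by
    rintro ⟨u, h⟩
    have := congrArg (fun y => (Subtype.val (Subtype.val y))) h
    simp at this
  have hlt := Fintype.card_lt_of_injective_of_notMem _ hinj hnot
  have hcard1 : Fintype.card {y : ↥s // (φ y).1 = (φ x₀).1} = Fintype.card U :=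
    Fintype.card_congr (fiberEquiv φ _)
  omega

lemma fw {V U : Type*} {H : SimpleGraph U} {v : U} {G : SimpleGraph V}
    {k m : ℕ} (f : V ⊕ U → Fin k) (hf : IsDUColoring H (boxGraph H v G) f)
    (e : {d : Fin k // d ≠ f (Sum.inr v)} ≃ Fin m)
    (hne : ∀ x, f (Sum.inl x) ≠ f (Sum.inr v))
    (hall : ∀ u, f (Sum.inr u) = f (Sum.inr v)) :
    IsDUColoring H G (fun x => e ⟨f (Sum.inl x), hne x⟩) := by
  intro d
  obtain ⟨n, ⟨φ⟩⟩ := hf (e.symm d).1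
  refine ⟨n, ⟨(isoInl (H := H) (v := v) (f ⁻¹' {(e.symm d).1}) _ ?_ ?_).trans φ⟩⟩
  · intro x
    simp only [Set.mem_preimage, Set.mem_singleton_iff]
    constructor
    · intro h
      have : (⟨f (Sum.inl x), hne x⟩ : {d : Fin k // d ≠ f (Sum.inr v)}) = e.symm d :=
        Subtype.ext h
      rw [this, Equiv.apply_symm_apply]
    · intro h
      have : e.symm (e ⟨f (Sum.inl x), hne x⟩) = e.symm d := congrArg e.symm h
      rw [Equiv.symm_apply_apply] at this
      exact congrArg Subtype.val this
  · intro u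
    simp only [Set.mem_preimage, Set.mem_singleton_iff]
    rw [hall u]
    exact fun h => (e.symm d).2 h.symm

lemma bw {V U : Type*} {H : SimpleGraph U} {v : U} {G : SimpleGraph V}
    {k m : ℕ} (c : Fin k) (e : {d : Fin k // d ≠ c} ≃ Fin m)
    (g : V → Fin m) (hg : IsDUColoring H G g) :
    IsDUColoring H (boxGraph H v G)
      (Sum.elim (fun x => ((e.symm (g x)).1)) (fun _ => c)) := by
  intro c'
  set f : V ⊕ U → Fin k := Sum.elim (fun x => ((e.symm (g x)).1)) (fun _ => c) with hfdef
  by_cases hcc : c' = c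
  · subst hcc
    refine ⟨1, ⟨((isoInr (G := G) (f ⁻¹' {c'}) ?_).symm.trans (oneCopy H))⟩⟩
    intro y
    simp only [Set.mem_preimage, Set.mem_singleton_iff]
    constructor
    · intro h
      cases y with
      | inl x =>
        exact absurd h ((e.symm (g x)).2)
      | inr u => exact ⟨u, rfl⟩
    · rintro ⟨u, rfl⟩
      rfl
  · obtain ⟨n, ⟨φ⟩⟩ := hg (e ⟨c', hcc⟩)
    refine ⟨n, ⟨((isoInl (f ⁻¹' {c'}) (g ⁻¹' {e ⟨c', hcc⟩}) ?_ ?_).symm.trans φ)⟩⟩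
    · intro x
      simp only [Set.mem_preimage, Set.mem_singleton_iff]
      constructor
      · intro h
        have : e.symm (g x) = ⟨c', hcc⟩ := Subtype.ext h
        rw [← this, Equiv.apply_symm_apply]
      · intro h
        have : e.symm (g x) = e.symm (e ⟨c', hcc⟩) := congrArg e.symm h
        rw [Equiv.symm_apply_apply] at this
        exact congrArg Subtype.val this
    · intro u
      simp only [Set.mem_preimage, Set.mem_singleton_iff]
      exact fun h => hcc h.symm


/-- `χ_{DU(H)}(□_{H,v}(G); k) = k · χ_{DU(H)}(G; k−1)` for `k ≥ 1`, where `H` is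
connected. -/
theorem duCount_boxGraph {V U : Type*} [Fintype V] [Fintype U]
    (H : SimpleGraph U) (hH : H.Connected) (v : U) (G : SimpleGraph V)
    (k : ℕ) (hk : 1 ≤ k) :
    duCount H (boxGraph H v G) k = k * duCount H G (k - 1) := by
  classical
  have hcard : ∀ c : Fin k, Fintype.card {d : Fin k // d ≠ c} = k - 1 := by
    intro c
    have := Fintype.card_subtype_compl (fun d : Fin k => d = c)
    simpa [Fintype.card_subtype_eq] using this
  let e : (c : Fin k) → ({d : Fin k // d ≠ c} ≃ Fin (k - 1)) := fun c =>
    Fintype.equivFinOfCardEq (hcard c)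
  have hEquiv : {f : V ⊕ U → Fin k // IsDUColoring H (boxGraph H v G) f} ≃
      Fin k × {g : V → Fin (k - 1) // IsDUColoring H G g} :=
    { toFun := fun p =>
        (p.1 (Sum.inr v),
          ⟨fun x => e (p.1 (Sum.inr v)) ⟨p.1 (Sum.inl x), (key H hH v G p.1 p.2).2 x⟩,
            fw p.1 p.2 (e _) (key H hH v G p.1 p.2).2 (key H hH v G p.1 p.2).1⟩)
      invFun := fun p =>
        ⟨Sum.elim (fun x => ((e p.1).symm (p.2.1 x)).1) (fun _ => p.1),
          bw p.1 (e p.1) p.2.1 p.2.2⟩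
      left_inv := by
        rintro ⟨f, hf⟩
        apply Subtype.ext
        funext y
        cases y with
        | inl x => simp
        | inr u => exact ((key H hH v G f hf).1 u).symm
      right_inv := by
        rintro ⟨c, g, hg⟩
        refine Prod.ext_iff.2 ⟨rfl, ?_⟩
        apply Subtype.ext
        funext x
        simp [Subtype.coe_eta]
        exact (e c).apply_symm_apply _ }
  rw [duCount, duCount, Nat.card_congr hEquiv, Nat.card_prod]
  simp [Nat.card_eq_fintype_card]
end
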